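/- arXiv:1409.3274 — 5 statements merged into one kernel-verified Lean document; each statement's English description precedes it below -/
import Mathlib

section
/- The number of binary characters on a set X of size n ≥ 2 that are compatible with a given binary character χ dividing X into blocks of sizes r and n−r, with 2 ≤ r ≤ n−2, equals 2^(r+1) + 2^(n−r+1) − 4. (Two binary characters on X are compatible if, for a fixed reference element x₀, the two sets of elements assigned a state different from that of x₀ are disjoint or nested.) -/
open Finset
open scoped Classical

/-!
Write `A` for the set of taxa on which `χ` differs from the reference taxon `x0`. A character
`ψ` is determined by its value at `x0` together with its own set `B ⊆ X \ {x0}`, so the count is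
twice the number of such `B` that are disjoint from `A`, contained in `A`, or contain `A`. These are
the subsets of `X \ ({x0} ∪ A)`, the subsets of `A` and the supersets of `A` inside `X \ {x0}`;
as `A ≠ ∅` the three families overlap only in `∅` and in `A`, giving
`2 (2 ^ |A| + 2 · 2 ^ (n - 1 - |A|) - 2)`. Since `|A|` is `r` or `n - r` and the result is
symmetric under `r ↦ n - r`, this is `2 ^ (r + 1) + 2 ^ (n - r + 1) - 4`.
-/

/-- The set of taxa whose state differs from that of the reference taxon `x0`. -/
noncomputable def Aset {n : ℕ} (x0 : Fin n) (χ : Fin n → Bool) : Finset (Fin n) :=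
  Finset.univ.filter fun x => χ x ≠ χ x0

/-- Two binary characters are compatible if their `Aset`s are disjoint or nested. -/
def Compat {n : ℕ} (x0 : Fin n) (χ₁ χ₂ : Fin n → Bool) : Prop :=
  Disjoint (Aset x0 χ₁) (Aset x0 χ₂) ∨ Aset x0 χ₁ ⊆ Aset x0 χ₂ ∨ Aset x0 χ₂ ⊆ Aset x0 χ₁

section CompatibleSubsets

variable {α : Type*} [DecidableEq α] {A S : Finset α}

theorem filter_compatible_powerset_eq (hAS : A ⊆ S) :
    {B ∈ S.powerset | Disjoint A B ∨ A ⊆ B ∨ B ⊆ A}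
      = (S \ A).powerset ∪ (A.powerset ∪ Icc A S) := by
  ext B
  simp only [mem_filter, mem_powerset, mem_union, mem_Icc, subset_sdiff]
  constructor
  · rintro ⟨hBS, hAB | hAB | hBA⟩
    · exact Or.inl ⟨hBS, hAB.symm⟩
    · exact Or.inr (Or.inr ⟨hAB, hBS⟩)
    · exact Or.inr (Or.inl hBA)
  · rintro (⟨hBS, hAB⟩ | hBA | ⟨hAB, hBS⟩)
    · exact ⟨hBS, Or.inl hAB.symm⟩
    · exact ⟨hBA.trans hAS, Or.inr (Or.inr hBA)⟩
    · exact ⟨hBS, Or.inr (Or.inl hAB)⟩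

theorem powerset_inter_Icc_self (hAS : A ⊆ S) : A.powerset ∩ Icc A S = {A} := by
  ext B
  simp only [mem_inter, mem_powerset, mem_Icc, mem_singleton]
  constructor
  · rintro ⟨hBA, hAB, -⟩
    exact hBA.antisymm hAB
  · rintro rfl
    exact ⟨Subset.rfl, Subset.rfl, hAS⟩

theorem powerset_sdiff_inter_eq_singleton_empty (hA : A.Nonempty) :
    (S \ A).powerset ∩ (A.powerset ∪ Icc A S) = {∅} := by
  ext B
  simp only [mem_inter, mem_union, mem_powerset, mem_Icc, mem_singleton, subset_sdiff]
  constructor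
  · rintro ⟨⟨-, hBA⟩, hB | ⟨hAB, -⟩⟩
    · exact disjoint_self.1 (hBA.mono_right hB)
    · exact absurd (disjoint_self.1 (hBA.mono_left hAB)) hA.ne_empty
  · rintro rfl
    simp

theorem card_filter_compatible_powerset_add_two (hAS : A ⊆ S) (hA : A.Nonempty) :
    #{B ∈ S.powerset | Disjoint A B ∨ A ⊆ B ∨ B ⊆ A} + 2
      = 2 ^ #A + 2 * 2 ^ (#S - #A) := by
  have hnested := card_union_add_card_inter A.powerset (Icc A S)
  have hall := card_union_add_card_inter (S \ A).powerset (A.powerset ∪ Icc A S)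
  rw [powerset_inter_Icc_self hAS, card_singleton] at hnested
  rw [powerset_sdiff_inter_eq_singleton_empty hA, card_singleton] at hall
  rw [filter_compatible_powerset_eq hAS]
  simp only [card_powerset, card_Icc_finset hAS, card_sdiff_of_subset hAS] at hnested hall
  omega

end CompatibleSubsets

section Characters

variable {n : ℕ} (x0 : Fin n)

theorem mem_Aset {χ : Fin n → Bool} {x : Fin n} : x ∈ Aset x0 χ ↔ χ x ≠ χ x0 := by
  simp [Aset]

theorem self_notMem_Aset (χ : Fin n → Bool) : x0 ∉ Aset x0 χ := by
  simp [mem_Aset]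

theorem Aset_ite {B : Finset (Fin n)} (hB : x0 ∉ B) (b : Bool) :
    Aset x0 (fun x => if x ∈ B then !b else b) = B := by
  ext x
  by_cases hx : x ∈ B <;> simp [mem_Aset, hx, hB]

theorem ite_mem_Aset (χ : Fin n → Bool) :
    (fun x => if x ∈ Aset x0 χ then !χ x0 else χ x0) = χ := by
  funext x
  simp only [mem_Aset]
  cases χ x <;> cases χ x0 <;> rfl

theorem card_filter_Aset (P : Finset (Fin n) → Prop) [DecidablePred P] :
    #{χ : Fin n → Bool | P (Aset x0 χ)} = 2 * #{B ∈ (univ.erase x0).powerset | P B} := by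
  rw [show 2 = #(univ : Finset Bool) from rfl, ← card_product]
  refine card_nbij' (fun χ => (χ x0, Aset x0 χ)) (fun p x => if x ∈ p.2 then !p.1 else p.1)
    ?_ ?_ (fun χ _ => ite_mem_Aset x0 χ) ?_
  · intro χ hχ
    simp only [mem_coe, mem_product, mem_filter, mem_univ, true_and, mem_powerset,
      subset_erase, subset_univ] at hχ ⊢
    exact ⟨self_notMem_Aset x0 χ, hχ⟩
  · rintro ⟨b, B⟩ hB
    simp only [mem_coe, mem_product, mem_filter, mem_univ, true_and, mem_powerset,
      subset_erase, subset_univ] at hB ⊢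
    rw [Aset_ite x0 hB.1]
    exact hB.2
  · rintro ⟨b, B⟩ hB
    simp only [mem_coe, mem_product, mem_filter, mem_univ, true_and, mem_powerset,
      subset_erase, subset_univ] at hB
    simp [Aset_ite x0 hB.1, hB.1]

theorem card_Aset_eq_or (χ : Fin n → Bool) :
    #(Aset x0 χ) = #{x | χ x = true} ∨ #(Aset x0 χ) = n - #{x | χ x = true} := by
  cases h : χ x0
  · left
    congr 1
    ext x
    simp [mem_Aset, h]
  · right
    have : Aset x0 χ = univ \ ({x | χ x = true} : Finset (Fin n)) := by
      ext x
      simp [mem_Aset, h]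
    rw [this, card_univ_sdiff, Fintype.card_fin]

theorem card_filter_compat (χ : Fin n → Bool) (hχ : (Aset x0 χ).Nonempty) :
    #{ψ | Compat x0 χ ψ}
      = 2 ^ (#(Aset x0 χ) + 1) + 2 ^ (n - #(Aset x0 χ) + 1) - 4 := by
  set A := Aset x0 χ
  have hAS : A ⊆ univ.erase x0 := subset_erase.2 ⟨subset_univ A, self_notMem_Aset x0 χ⟩
  have hcount := card_filter_compatible_powerset_add_two hAS hχ
  have hA_pos : 0 < #A := hχ.card_pos
  have hA_le : #A ≤ n - 1 := by simpa using card_le_card hAS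
  have hn_pos : 0 < n := x0.pos
  rw [card_erase_of_mem (mem_univ x0), card_univ, Fintype.card_fin] at hcount
  have hpow : 2 ^ (n - #A + 1) = 4 * 2 ^ (n - 1 - #A) := by
    rw [show 4 = 2 ^ 2 from rfl, ← pow_add]; congr 1; omega
  have hfilter : #{ψ | Compat x0 χ ψ}
      = 2 * #{B ∈ (univ.erase x0).powerset | Disjoint A B ∨ A ⊆ B ∨ B ⊆ A} := by
    convert card_filter_Aset x0 fun B => Disjoint A B ∨ A ⊆ B ∨ B ⊆ A
    rfl
  rw [hfilter, hpow, pow_succ]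
  omega

end Characters

theorem stmt0_general (n r : ℕ) (hr : 2 ≤ r) (hr' : r ≤ n - 2)
    (x0 : Fin n) (χ : Fin n → Bool)
    (hχ : (Finset.univ.filter fun x => χ x = true).card = r) :
    (Finset.univ.filter fun ψ : Fin n → Bool => Compat x0 χ ψ).card
      = 2 ^ (r + 1) + 2 ^ (n - r + 1) - 4 := by
  rcases card_Aset_eq_or x0 χ with hA | hA <;> rw [hχ] at hA
  · rw [card_filter_compat x0 χ (card_pos.1 (by omega)), hA]
  · rw [card_filter_compat x0 χ (card_pos.1 (by omega)), hA, Nat.sub_sub_self (by omega),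
      add_comm (2 ^ (n - r + 1))]

/-- The number of binary characters on an `n`-set compatible with a character splitting the
set into blocks of sizes `r` and `n - r` (with `2 ≤ r ≤ n - 2`) is
`2^(r+1) + 2^(n-r+1) - 4`. -/
theorem stmt0 (n r : ℕ) (hn : 2 ≤ n) (hr : 2 ≤ r) (hr' : r ≤ n - 2)
    (x0 : Fin n) (χ : Fin n → Bool)
    (hχ : (Finset.univ.filter fun x => χ x = true).card = r) :
    (Finset.univ.filter fun ψ : Fin n → Bool => Compat x0 χ ψ).card
      = 2 ^ (r + 1) + 2 ^ (n - r + 1) - 4 :=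
  stmt0_general n r hr hr' x0 χ hχ
end

section
/- The probability p_n that two independent uniformly random binary characters on an n-element set (n ≥ 2) are compatible equals 4·(3/4)^n − (1/2)^(n−1)·(3 − (1/2)^(n−1)). -/
/-! Encode a pair of characters as the map `x ↦ (χ₁ x, χ₂ x)`. Relative to the value at `x0`, the
value at `x` determines the pattern `(x ∈ A(χ₁), x ∈ A(χ₂))` bijectively, and compatibility says
that one of the three patterns other than `(false, false)` never occurs. Maps omitting a given set
`T` of such patterns number `4 * (4 - |T|) ^ (n - 1)`, so inclusion–exclusion over the three
patterns gives `4 * (3 * 3 ^ (n - 1) - 3 * 2 ^ (n - 1) + 1)` compatible pairs. -/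

open Finset
open scoped Classical

section CountingMaps

variable {α β : Type*} [Fintype α] [DecidableEq α] [Fintype β] [DecidableEq β]

theorem card_filter_apply_eq_and_forall_mem (a : α) {c : β} {s : Finset β} (hc : c ∈ s) :
    #{h : α → β | h a = c ∧ ∀ x, h x ∈ s} = #s ^ (Fintype.card α - 1) := by
  have hpi : ({h : α → β | h a = c ∧ ∀ x, h x ∈ s} : Finset (α → β))
      = Fintype.piFinset (Function.update (fun _ => s) a {c}) := by
    ext h
    simp only [mem_filter, mem_univ, true_and, Fintype.mem_piFinset]
    constructor
    · rintro ⟨rfl, hs⟩ x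
      rcases eq_or_ne x a with rfl | hx <;> simp [*]
    · intro hs
      have ha : h a = c := by simpa using hs a
      refine ⟨ha, fun x => ?_⟩
      rcases eq_or_ne x a with rfl | hx
      · exact ha ▸ hc
      · simpa [hx] using hs x
  rw [hpi, Fintype.card_piFinset, ← mul_prod_erase _ _ (mem_univ a)]
  rw [prod_congr rfl fun x hx => by rw [Function.update_of_ne (ne_of_mem_erase hx)]]
  simp

theorem card_filter_forall_mem_apply (a : α) {t : β → Finset β} (ht : ∀ c, c ∈ t c) :
    #{h : α → β | ∀ x, h x ∈ t (h a)} = ∑ c, #(t c) ^ (Fintype.card α - 1) := by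
  rw [card_eq_sum_card_fiberwise (f := fun h => h a) (t := univ) fun _ _ => mem_univ _]
  refine sum_congr rfl fun c _ => ?_
  rw [filter_filter, ← card_filter_apply_eq_and_forall_mem a (ht c)]
  congr 1
  refine filter_congr fun h _ => ?_
  constructor
  · rintro ⟨hs, rfl⟩; exact ⟨rfl, hs⟩
  · rintro ⟨rfl, hs⟩; exact ⟨hs, rfl⟩

end CountingMaps

/-- For characters with values `c` at the reference taxon and `v` at a taxon `x`,
`relPattern c v` records whether `x ∈ A(χ₁)` and whether `x ∈ A(χ₂)`. -/
def relPattern (c v : Bool × Bool) : Bool × Bool := (v.1 != c.1, v.2 != c.2)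

theorem relPattern_involutive (c : Bool × Bool) : Function.Involutive (relPattern c) := by
  intro v; cases c.1 <;> cases c.2 <;> simp [relPattern]

theorem relPattern_self (c : Bool × Bool) : relPattern c c = (false, false) := by
  simp [relPattern]

theorem card_filter_relPattern_notMem (c : Bool × Bool) (T : Finset (Bool × Bool)) :
    #{v | relPattern c v ∉ T} = 4 - #T := by
  rw [show 4 = Fintype.card (Bool × Bool) from rfl, ← card_compl]
  exact card_equiv (relPattern_involutive c).toPerm (by simp)

section OmitsPattern

variable {α : Type*} [Fintype α] [DecidableEq α]

def omitsPattern (a : α) (k : Bool × Bool) : Finset (α → Bool × Bool) :=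
  {h | ∀ x, relPattern (h a) (h x) ≠ k}

theorem mem_inf_omitsPattern (a : α) {T : Finset (Bool × Bool)} {h : α → Bool × Bool} :
    h ∈ T.inf (omitsPattern a) ↔ ∀ x, relPattern (h a) (h x) ∉ T := by
  induction T using cons_induction with
  | empty => simp
  | cons k T hk ih => simp [omitsPattern, ih, forall_and]

theorem card_inf_omitsPattern (a : α) {T : Finset (Bool × Bool)} (hT : (false, false) ∉ T) :
    #(T.inf (omitsPattern a)) = 4 * (4 - #T) ^ (Fintype.card α - 1) := by
  have hself (c : Bool × Bool) : c ∈ ({v | relPattern c v ∉ T} : Finset _) := by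
    simpa [relPattern_self] using hT
  calc #(T.inf (omitsPattern a))
      = #{h : α → Bool × Bool | ∀ x, h x ∈ ({v | relPattern (h a) v ∉ T} : Finset _)} := by
        congr 1; ext h; simp [mem_inf_omitsPattern]
    _ = 4 * (4 - #T) ^ (Fintype.card α - 1) := by
        simp only [card_filter_forall_mem_apply a hself, card_filter_relPattern_notMem,
          sum_const, card_univ, Fintype.card_prod, Fintype.card_bool, smul_eq_mul]

theorem card_sup_omitsPattern (a : α) {m : ℕ} (hα : Fintype.card α = m + 1) :
    (#(({(false, false)}ᶜ : Finset (Bool × Bool)).sup (omitsPattern a)) : ℤ)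
      = 12 * 3 ^ m - 12 * 2 ^ m + 4 := by
  set K : Finset (Bool × Bool) := {(false, false)}ᶜ
  have hK : #K = 3 := rfl
  have hincompat : (#(K.sup (omitsPattern a))ᶜ : ℤ)
      = ∑ T ∈ K.powerset, (-1) ^ #T * ((4 * (4 - #T) ^ m : ℕ) : ℤ) := by
    rw [Finset.compl_sup, inclusion_exclusion_card_inf_compl]
    refine sum_congr rfl fun T hT => ?_
    rw [card_inf_omitsPattern a fun h => by simpa [K] using mem_powerset.1 hT h, hα,
      Nat.add_sub_cancel]
  rw [sum_powerset_apply_card (fun j => (-1 : ℤ) ^ j * ((4 * (4 - j) ^ m : ℕ) : ℤ)), hK,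
    card_compl, Nat.cast_sub (card_le_univ _)] at hincompat
  simp [sum_range_succ, hα, pow_succ] at hincompat
  linarith

end OmitsPattern

theorem compat_iff_mem_sup_omitsPattern {n : ℕ} (x0 : Fin n) (χ₁ χ₂ : Fin n → Bool) :
    Compat x0 χ₁ χ₂ ↔
      (fun x => (χ₁ x, χ₂ x)) ∈ ({(false, false)}ᶜ : Finset (Bool × Bool)).sup (omitsPattern x0) := by
  rw [show ({(false, false)}ᶜ : Finset (Bool × Bool)) = {(true, true), (true, false), (false, true)}
    by decide]
  simp [omitsPattern, relPattern, Compat, Aset, disjoint_left, subset_iff, bne_iff_ne, not_imp_not]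

theorem card_compat {m : ℕ} (x0 : Fin (m + 1)) :
    (#{p : (Fin (m + 1) → Bool) × (Fin (m + 1) → Bool) | Compat x0 p.1 p.2} : ℤ)
      = 12 * 3 ^ m - 12 * 2 ^ m + 4 := by
  rw [← card_sup_omitsPattern x0 (Fintype.card_fin _)]
  congr 1
  refine card_equiv (Equiv.arrowProdEquivProdArrow _ _ _).symm fun p => ?_
  simp only [mem_filter, mem_univ, true_and, compat_iff_mem_sup_omitsPattern]
  rfl

theorem stmt2_general (n : ℕ) (x0 : Fin n) :
    ((Finset.univ.filter fun p : (Fin n → Bool) × (Fin n → Bool) =>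
        Compat x0 p.1 p.2).card : ℝ) / 4 ^ n
      = 4 * (3 / 4 : ℝ) ^ n
          - (1 / 2 : ℝ) ^ (n - 1) * (3 - (1 / 2 : ℝ) ^ (n - 1)) := by
  obtain ⟨m, rfl⟩ : ∃ m, n = m + 1 := Nat.exists_eq_add_one.2 x0.pos
  have h4 : (4 : ℝ) ^ m = 2 ^ m * 2 ^ m := by rw [← mul_pow]; norm_num
  rw [← Int.cast_natCast, card_compat x0, Nat.add_sub_cancel]
  push_cast
  rw [div_pow, div_pow, one_pow, pow_succ (3 : ℝ), pow_succ (4 : ℝ), h4]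
  field_simp
  ring

/-- The probability that two independent uniformly random binary characters on an
n-element set (n ≥ 2) are compatible equals 4(3/4)^n - (1/2)^(n-1) (3 - (1/2)^(n-1)). -/
theorem stmt2 (n : ℕ) (hn : 2 ≤ n) (x0 : Fin n) :
    ((Finset.univ.filter fun p : (Fin n → Bool) × (Fin n → Bool) =>
        Compat x0 p.1 p.2).card : ℝ) / 4 ^ n
      = 4 * (3 / 4 : ℝ) ^ n
          - (1 / 2 : ℝ) ^ (n - 1) * (3 - (1 / 2 : ℝ) ^ (n - 1)) :=
  stmt2_general n x0
end

section
/- For every n ≥ 2, the probability p_n that two independent uniformly random binary characters on an n-element set are compatible satisfies p_n ≤ 4·(3/4)^n. -/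
open Finset
open scoped Classical

/-! Zip two characters into `x ↦ (χ₁ x, χ₂ x) : Fin n → Bool × Bool`. If `A(χ₁)`, `A(χ₂)` are
disjoint, the zipped map never takes the value `(!χ₁ x0, !χ₂ x0)`; if `A(χ₁) ⊆ A(χ₂)` it misses
`(!χ₁ x0, χ₂ x0)`, and symmetrically. So compatible pairs zip to non-surjective maps, and for each
of the four values only `3 ^ n` maps miss it: at most `4 * 3 ^ n` of the `4 ^ n` pairs are
compatible. -/

theorem card_filter_not_surjective_le (ι β : Type*) [Fintype ι] [DecidableEq ι] [Fintype β]
    [DecidableEq β] :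
    #{f : ι → β | ¬ Function.Surjective f} ≤
      Fintype.card β * (Fintype.card β - 1) ^ Fintype.card ι := by
  have hsub : ({f : ι → β | ¬ Function.Surjective f} : Finset (ι → β)) ⊆
      univ.biUnion fun b => Fintype.piFinset fun _ => ({b}ᶜ : Finset β) := by
    intro f hf
    obtain ⟨b, hb⟩ : ∃ b, ∀ i, f i ≠ b := by simpa [Function.Surjective] using hf
    simpa using ⟨b, hb⟩
  calc _ ≤ _ := card_le_card hsub
    _ ≤ ∑ b : β, #(Fintype.piFinset fun _ : ι => ({b}ᶜ : Finset β)) := card_biUnion_le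
    _ = _ := by simp [card_compl]

theorem mem_Aset_iff {n : ℕ} {x0 : Fin n} {χ : Fin n → Bool} {x : Fin n} :
    x ∈ Aset x0 χ ↔ χ x = !χ x0 := by
  simp only [Aset, mem_filter, mem_univ, true_and, Bool.eq_not]

theorem not_surjective_of_compat {n : ℕ} {x0 : Fin n} {χ₁ χ₂ : Fin n → Bool}
    (h : Compat x0 χ₁ χ₂) : ¬ Function.Surjective fun x => (χ₁ x, χ₂ x) := by
  intro hsurj
  rcases h with hdisj | hsub | hsub
  · obtain ⟨x, hx⟩ := hsurj (!χ₁ x0, !χ₂ x0)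
    simp only [Prod.mk.injEq] at hx
    exact disjoint_left.mp hdisj (mem_Aset_iff.2 hx.1) (mem_Aset_iff.2 hx.2)
  · obtain ⟨x, hx⟩ := hsurj (!χ₁ x0, χ₂ x0)
    simp only [Prod.mk.injEq] at hx
    simpa [hx.2] using mem_Aset_iff.1 (hsub (mem_Aset_iff.2 hx.1))
  · obtain ⟨x, hx⟩ := hsurj (χ₁ x0, !χ₂ x0)
    simp only [Prod.mk.injEq] at hx
    simpa [hx.1] using mem_Aset_iff.1 (hsub (mem_Aset_iff.2 hx.2))

theorem card_compat_le (n : ℕ) (x0 : Fin n) :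
    #{p : (Fin n → Bool) × (Fin n → Bool) | Compat x0 p.1 p.2} ≤ 4 * 3 ^ n := by
  let zip (p : (Fin n → Bool) × (Fin n → Bool)) (x : Fin n) : Bool × Bool := (p.1 x, p.2 x)
  have zip_injective : zip.Injective := fun p q h =>
    Prod.ext (funext fun x => congrArg Prod.fst (congrFun h x))
      (funext fun x => congrArg Prod.snd (congrFun h x))
  calc _ ≤ #{f : Fin n → Bool × Bool | ¬ Function.Surjective f} :=
        card_le_card_of_injOn zip (fun p hp => by
          simpa using not_surjective_of_compat (mem_filter.mp hp).2) zip_injective.injOn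
    _ ≤ 4 * 3 ^ n := by
      simpa only [Fintype.card_prod, Fintype.card_bool, Fintype.card_fin]
        using card_filter_not_surjective_le (Fin n) (Bool × Bool)

theorem stmt3_general (n : ℕ) (x0 : Fin n) :
    ((Finset.univ.filter fun p : (Fin n → Bool) × (Fin n → Bool) =>
        Compat x0 p.1 p.2).card : ℝ) / 4 ^ n
      ≤ 4 * (3 / 4 : ℝ) ^ n := by
  rw [div_pow, mul_div_assoc', div_le_div_iff_of_pos_right (by positivity)]
  exact_mod_cast card_compat_le n x0

/-- For every n ≥ 2 the probability that two independent uniformly random binary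
characters on an n-element set are compatible is at most 4(3/4)^n. -/
theorem stmt3 (n : ℕ) (hn : 2 ≤ n) (x0 : Fin n) :
    ((Finset.univ.filter fun p : (Fin n → Bool) × (Fin n → Bool) =>
        Compat x0 p.1 p.2).card : ℝ) / 4 ^ n
      ≤ 4 * (3 / 4 : ℝ) ^ n :=
  stmt3_general n x0
end

section
/- Let x₁, …, x_{k+1} be integers subject to the constraints k ≤ x_i ≤ n−3 for all i and ∑_{i=1}^{k+1} x_i = (k+1)n − (n+2k) = kn − 2k. Then the quantity ∑_{i=1}^{k+1} (1/2)^{x_i} is at most k·(1/2)^{n−3} + (1/2)^k. -/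
open Finset

lemma aux1 (c e : ℕ) (h : c ≤ e) : e * 2^c + c ≤ c * 2^e + e := by
  induction e, h using Nat.le_induction with
  | base => exact le_refl _
  | succ e he ih =>
    have h1 : 2^c ≤ 2^e := Nat.pow_le_pow_right (by norm_num) he
    have h2 : 2^(e+1) = 2^e + 2^e := by ring
    rcases Nat.eq_zero_or_pos c with hc | hc
    · subst hc; simp
    · have h3 : 2^c ≤ c * 2^e := le_trans h1 (Nat.le_mul_of_pos_left _ hc)
      nlinarith [ih, h3]

lemma auxpow (y m : ℕ) (h : y ≤ m) : (1/2:ℝ)^y * 2^m = 2^(m-y) := by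
  have h2 : (2:ℝ)^m = 2^(m-y) * 2^y := by rw [← pow_add]; congr 1; omega
  rw [h2, div_pow, one_pow]
  field_simp

lemma aux2 (k y m : ℕ) (h1 : k ≤ y) (h2 : y ≤ m) :
    ((m:ℝ) - k) * (1/2)^y ≤ ((m:ℝ) - y) * (1/2)^k + ((y:ℝ) - k) * (1/2)^m := by
  have hnat : (m-k) * 2^(m-y) ≤ (m-y) * 2^(m-k) + (y-k) := by
    have h := aux1 (m-y) (m-k) (by omega)
    generalize hA : (m-k) * 2^(m-y) = A at *
    generalize hB : (m-y) * 2^(m-k) = B at *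
    omega
  have hR : ((m:ℝ)-k) * 2^(m-y) ≤ ((m:ℝ)-y) * 2^(m-k) + ((y:ℝ)-k) := by
    have hc : ((((m-k) * 2^(m-y)) : ℕ) : ℝ) ≤ ((((m-y) * 2^(m-k) + (y-k)) : ℕ) : ℝ) :=
      Nat.cast_le.mpr hnat
    push_cast [Nat.cast_sub (le_trans h1 h2), Nat.cast_sub h2, Nat.cast_sub h1] at hc
    exact hc
  have h2m : (0:ℝ) < 2^m := by positivity
  apply le_of_mul_le_mul_right _ h2m
  calc ((m:ℝ)-k) * (1/2)^y * 2^m = ((m:ℝ)-k) * ((1/2:ℝ)^y * 2^m) := by ring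
    _ = ((m:ℝ)-k) * 2^(m-y) := by rw [auxpow y m h2]
    _ ≤ ((m:ℝ)-y)*2^(m-k) + ((y:ℝ)-k) := hR
    _ = ((m:ℝ)-y)*((1/2:ℝ)^k*2^m) + ((y:ℝ)-k)*((1/2:ℝ)^m*2^m) := by
        rw [auxpow k m (le_trans h1 h2), auxpow m m le_rfl]; simp
    _ = (((m:ℝ) - y) * (1/2)^k + ((y:ℝ) - k) * (1/2)^m) * 2^m := by ring

/-- Extremal bound: if k ≤ xᵢ ≤ n-3 for i = 1,…,k+1 and ∑ xᵢ = k(n-2), then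
∑ (1/2)^(xᵢ) ≤ k(1/2)^(n-3) + (1/2)^k. -/
theorem stmt8 (n k : ℕ) (hk : 1 ≤ k) (hn : k + 3 ≤ n)
    (x : Fin (k + 1) → ℕ)
    (hlow : ∀ i, k ≤ x i) (hhigh : ∀ i, x i ≤ n - 3)
    (hsum : ∑ i, x i = k * (n - 2)) :
    ∑ i, ((1 : ℝ) / 2) ^ (x i)
      ≤ (k : ℝ) * ((1 : ℝ) / 2) ^ (n - 3) + ((1 : ℝ) / 2) ^ k := by
  set m := n - 3 with hm
  have hkm : k ≤ m := by omega
  rcases eq_or_lt_of_le hkm with heq | hlt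
  · -- n = k + 3, all x i = k
    have hx : ∀ i, x i = k := fun i => le_antisymm (heq ▸ hhigh i) (hlow i)
    simp only [hx]
    rw [Finset.sum_const, card_univ, Fintype.card_fin, ← heq]
    ring_nf
    exact le_refl _
  · -- k < m
    have hmk : (0:ℝ) < (m:ℝ) - k := by
      have : (k:ℝ) < m := by exact_mod_cast hlt
      linarith
    apply le_of_mul_le_mul_left _ hmk
    have hstep : ((m:ℝ) - k) * ∑ i, ((1:ℝ)/2)^(x i)
        ≤ ∑ i, (((m:ℝ) - x i) * (1/2)^k + ((x i:ℝ) - k) * (1/2)^m) := by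
      rw [Finset.mul_sum]
      exact Finset.sum_le_sum fun i _ => aux2 k (x i) m (hlow i) (hhigh i)
    have hmcast : (m:ℝ) = (n:ℝ) - 3 := by
      rw [hm, Nat.cast_sub (by omega : 3 ≤ n)]; norm_num
    have hsums : ∑ i, ((x i : ℝ)) = (k:ℝ) * ((m:ℝ) + 1) := by
      have h1 : ∑ i, ((x i : ℕ) : ℝ) = ((k * (n-2) : ℕ) : ℝ) := by
        rw [← Nat.cast_sum, hsum]
      push_cast [Nat.cast_sub (by omega : 2 ≤ n)] at h1
      rw [h1, hmcast]; ring
    have hrhs : ∑ i, (((m:ℝ) - x i) * (1/2)^k + ((x i:ℝ) - k) * (1/2)^m)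
        = ((m:ℝ) - k) * ((k:ℝ) * (1/2)^m + (1/2)^k) := by
      rw [Finset.sum_add_distrib]
      rw [← Finset.sum_mul, ← Finset.sum_mul]
      rw [Finset.sum_sub_distrib, Finset.sum_sub_distrib]
      rw [hsums]
      simp [Finset.sum_const, card_univ, Fintype.card_fin]
      ring
    calc ((m:ℝ) - k) * ∑ i, ((1:ℝ)/2)^(x i)
        ≤ ∑ i, (((m:ℝ) - x i) * (1/2)^k + ((x i:ℝ) - k) * (1/2)^m) := hstep
      _ = ((m:ℝ) - k) * ((k:ℝ) * (1/2)^m + (1/2)^k) := hrhs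
end

section
/- For an unrooted phylogenetic tree T with n leaves and at least k interior edges, the probability p_T that a uniformly random binary character on the leaf set is compatible with T satisfies p_T ≤ k·(1/2)^(n−3) + (1/2)^k. -/
open Finset SimpleGraph
open scoped Classical

/-- The set of vertices lying on a path between two elements of `S` (the minimal
subtree of the tree `G` spanning `S`). -/
def tspan {V : Type*} (G : SimpleGraph V) (S : Set V) : Set V :=
  {u | ∃ a ∈ S, ∃ b ∈ S, ∃ p : G.Walk a b, p.IsPath ∧ u ∈ p.support}

/-- A binary character `χ` on the leaves (labelled by `ℓ`) is compatible with the tree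
`G` iff the minimal subtrees spanning the two state classes share at most one vertex
(equivalently, some refinement of `G` displays `χ`). -/
def CompatWithTree {V : Type*} {n : ℕ} (G : SimpleGraph V) (ℓ : Fin n → V)
    (χ : Fin n → Bool) : Prop :=
  Set.Subsingleton
    (tspan G (ℓ '' {x | χ x = true}) ∩ tspan G (ℓ '' {x | χ x = false}))

/-!
If `χ` is compatible, the subtrees spanned by its two colour classes meet in at most one vertex,
and either that vertex or a suitable vertex of the path joining the two subtrees is an interior
vertex `v` lying on every path between differently coloured leaves. Such a character is constant
on the branches of the tree at `v`, so `v` accounts for at most `2 ^ deg v` characters, and the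
compatible characters number at most `∑ 2 ^ deg v` over the interior vertices. There are
`I ≥ k + 1` interior vertices, each of degree at least 3, with degrees summing to `n + 2I - 2`;
by convexity of `2 ^ x` the sum is largest when all excess degree sits on one vertex, which gives
`8 (I - 1) + 8 * 2 ^ (n - 2 - I) ≤ 8 k + 8 * 2 ^ (n - 3 - k)`.
-/

namespace SimpleGraph

variable {V : Type*} {G : SimpleGraph V}

namespace Walk

lemma exists_eq_append_of_mem_set {u w : V} (p : G.Walk u w) {S : Set V} (hw : w ∈ S) :
    ∃ (m : V) (q : G.Walk u m) (r : G.Walk m w), m ∈ S ∧ p = q.append r ∧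
      ∀ z ∈ q.support, z ∈ S → z = m := by
  induction p with
  | nil => exact ⟨_, nil, nil, hw, rfl, by simp⟩
  | @cons a b c h p ih =>
    by_cases ha : a ∈ S
    · exact ⟨a, nil, cons h p, ha, rfl, by simp⟩
    obtain ⟨m, q, r, hm, rfl, hq⟩ := ih hw
    refine ⟨m, cons h q, r, hm, rfl, ?_⟩
    intro z hz hzS
    rw [support_cons, List.mem_cons] at hz
    rcases hz with rfl | hz
    · exact absurd hzS ha
    · exact hq z hz hzS

lemma IsPath.append_of_support_inter {u v w : V} {p : G.Walk u v} {q : G.Walk v w}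
    (hp : p.IsPath) (hq : q.IsPath) (hpq : ∀ z ∈ p.support, z ∈ q.support → z = v) :
    (p.append q).IsPath := by
  have hq' := hq.support_nodup
  rw [← q.cons_tail_support, List.nodup_cons] at hq'
  rw [isPath_def, support_append]
  refine hp.support_nodup.append hq'.2 fun z hzp hzq => ?_
  rw [hpq z hzp (List.mem_of_mem_tail hzq)] at hzq
  exact hq'.1 hzq

end Walk

namespace IsTree

variable (hG : G.IsTree)

noncomputable def path (u v : V) : G.Walk u v :=
  (hG.existsUnique_path u v).choose

lemma isPath_path (u v : V) : (hG.path u v).IsPath :=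
  (hG.existsUnique_path u v).choose_spec.1

lemma eq_path {u v : V} {p : G.Walk u v} (hp : p.IsPath) : p = hG.path u v :=
  (hG.existsUnique_path u v).choose_spec.2 p hp

lemma support_path_subset {u v : V} (p : G.Walk u v) : (hG.path u v).support ⊆ p.support := by
  rw [← hG.eq_path p.bypass_isPath]
  exact p.support_bypass_subset_support

lemma mem_support_path_comm {u v z : V} :
    z ∈ (hG.path u v).support ↔ z ∈ (hG.path v u).support := by
  rw [← hG.eq_path (hG.isPath_path v u).reverse, Walk.support_reverse, List.mem_reverse]

lemma mem_support_path_or {x y z : V} (hz : z ∈ (hG.path x y).support) (w : V) :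
    z ∈ (hG.path x w).support ∨ z ∈ (hG.path w y).support := by
  simpa using hG.support_path_subset ((hG.path x w).append (hG.path w y)) hz

lemma support_path_subset_of_mem {a b x : V} (hx : x ∈ (hG.path a b).support) :
    (hG.path a x).support ⊆ (hG.path a b).support := by
  rw [← hG.eq_path ((hG.isPath_path a b).takeUntil hx)]
  exact (hG.path a b).support_takeUntil_subset_support hx

lemma exists_median (a b c : V) : ∃ m, m ∈ (hG.path c a).support ∧
    m ∈ (hG.path a b).support ∧ m ∈ (hG.path c b).support := by
  -- `m` is the first vertex of the path from `c` to `a` that lies on the path from `a` to `b`.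
  obtain ⟨m, q, _, hm, hqr, hq⟩ := (hG.path c a).exists_eq_append_of_mem_set
    (S := {z | z ∈ (hG.path a b).support}) (hG.path a b).start_mem_support
  have hqpath : q.IsPath := (hqr ▸ hG.isPath_path c a).of_append_left
  have hcb := hG.eq_path (hqpath.append_of_support_inter ((hG.isPath_path a b).dropUntil hm)
    fun z hzq hzd => hq z hzq ((hG.path a b).support_dropUntil_subset_support hm hzd))
  refine ⟨m, ?_, hm, ?_⟩
  · rw [hqr]
    exact (Walk.mem_support_append_iff _ _).2 (Or.inl q.end_mem_support)
  · rw [← hcb]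
    exact (Walk.mem_support_append_iff _ _).2 (Or.inl q.end_mem_support)

lemma support_path_self (v : V) : (hG.path v v).support = [v] := by
  rw [← hG.eq_path Walk.IsPath.nil, Walk.support_nil]

end IsTree

lemma subsingleton_neighborSet_of_degree_le_one [G.LocallyFinite] {v : V} (hv : G.degree v ≤ 1) :
    (G.neighborSet v).Subsingleton := by
  intro x hx y hy
  rw [← card_neighborFinset_eq_degree, Finset.card_le_one] at hv
  exact hv x ((mem_neighborFinset G v x).2 hx) y ((mem_neighborFinset G v y).2 hy)

lemma Walk.IsPath.notMem_support_of_degree_le_one [G.LocallyFinite] {u v z : V}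
    {p : G.Walk u v} (hp : p.IsPath) (hzu : z ≠ u) (hzv : z ≠ v) (hz : G.degree z ≤ 1) :
    z ∉ p.support :=
  hp.isTrail.not_mem_support_of_subsingleton_neighborSet hzu hzv
    (subsingleton_neighborSet_of_degree_le_one hz)

lemma mem_of_mem_tspan_of_degree_le_one [G.LocallyFinite] {S : Set V} {z : V}
    (hz : z ∈ tspan G S) (hdeg : G.degree z ≤ 1) : z ∈ S := by
  obtain ⟨a, ha, b, hb, p, hp, hzp⟩ := hz
  by_contra hzS
  exact hp.notMem_support_of_degree_le_one (by rintro rfl; exact hzS ha)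
    (by rintro rfl; exact hzS hb) hdeg hzp

lemma subset_tspan (S : Set V) : S ⊆ tspan G S :=
  fun a ha => ⟨a, ha, a, ha, Walk.nil, Walk.IsPath.nil, Walk.start_mem_support _⟩

def PathConvex (G : SimpleGraph V) (S : Set V) : Prop :=
  ∀ ⦃x y : V⦄, x ∈ S → y ∈ S → ∀ p : G.Walk x y, p.IsPath → ∀ z ∈ p.support, z ∈ S

namespace IsTree

variable (hG : G.IsTree)

lemma mem_of_pathConvex {S : Set V} (hS : G.PathConvex S) {x y z : V} (hx : x ∈ S) (hy : y ∈ S)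
    (hz : z ∈ (hG.path x y).support) : z ∈ S :=
  hS hx hy _ (hG.isPath_path x y) z hz

lemma pathConvex_support_path (a b : V) : G.PathConvex {z | z ∈ (hG.path a b).support} := by
  intro x y hx hy p hp z hz
  rw [hG.eq_path hp] at hz
  rcases hG.mem_support_path_or hz a with h | h
  · exact hG.support_path_subset_of_mem hx (hG.mem_support_path_comm.1 h)
  · exact hG.support_path_subset_of_mem hy h

lemma mem_tspan {S : Set V} {a b z : V} (ha : a ∈ S) (hb : b ∈ S)
    (hz : z ∈ (hG.path a b).support) : z ∈ tspan G S :=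
  ⟨a, ha, b, hb, _, hG.isPath_path a b, hz⟩

lemma pathConvex_tspan (hG : G.IsTree) (S : Set V) : G.PathConvex (tspan G S) := by
  rintro x y ⟨a₁, ha₁, a₂, ha₂, p₁, hp₁, hx⟩ ⟨a₃, ha₃, a₄, ha₄, p₃, hp₃, hy⟩ p hp z hz
  rw [hG.eq_path hp₁] at hx
  rw [hG.eq_path hp₃] at hy
  rw [hG.eq_path hp] at hz
  rcases hG.mem_support_path_or hz a₁ with h | h
  · exact hG.mem_tspan ha₁ ha₂ (hG.support_path_subset_of_mem hx (hG.mem_support_path_comm.1 h))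
  rcases hG.mem_support_path_or h a₃ with h | h
  · exact hG.mem_tspan ha₁ ha₃ h
  · exact hG.mem_tspan ha₃ ha₄ (hG.support_path_subset_of_mem hy h)

/-- The median of `a`, `b`, `v` lies in `A`, and either on the path from `v` to `w` or in `B`;
either way it is `v`. -/
lemma mem_support_path_of_gate {A B : Set V} (hA : G.PathConvex A) (hB : G.PathConvex B)
    {v w a b : V} (hv : v ∈ A) (hw : w ∈ B)
    (hvw : ∀ z ∈ (hG.path v w).support, z ∈ A → z = v) (hAB : ∀ z ∈ A, z ∈ B → z = v)
    (ha : a ∈ A) (hb : b ∈ B) : v ∈ (hG.path a b).support := by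
  obtain ⟨m, hmva, hmab, hmvb⟩ := hG.exists_median a b v
  have hmA : m ∈ A := hG.mem_of_pathConvex hA hv ha hmva
  rcases hG.mem_support_path_or hmvb w with h | h
  · rwa [← hvw m h hmA]
  · rwa [← hAB m hmA (hG.mem_of_pathConvex hB hw hb h)]

lemma support_path_subset_of_gates {A B : Set V} (hA : G.PathConvex A) (hB : G.PathConvex B)
    {v w a b : V} (hv : v ∈ A) (hw : w ∈ B)
    (hvwA : ∀ z ∈ (hG.path v w).support, z ∈ A → z = v)
    (hvwB : ∀ z ∈ (hG.path v w).support, z ∈ B → z = w)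
    (hABv : ∀ z ∈ A, z ∈ B → z = v) (hABw : ∀ z ∈ A, z ∈ B → z = w) (ha : a ∈ A) (hb : b ∈ B) :
    (hG.path v w).support ⊆ (hG.path a b).support := by
  have hva := hG.mem_support_path_of_gate hA hB hv hw hvwA hABv ha hb
  have hwb := hG.mem_support_path_of_gate hB hA hw hv
    (fun z hz => hvwB z (hG.mem_support_path_comm.1 hz)) (fun z hzB hzA => hABw z hzA hzB) hb ha
  exact fun z hz => hG.pathConvex_support_path a b hva (hG.mem_support_path_comm.1 hwb) _
    (hG.isPath_path v w) z hz

lemma exists_support_path_subset {A B : Set V} (hA : G.PathConvex A) (hB : G.PathConvex B)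
    (hAB : (A ∩ B).Subsingleton) {a₀ b₀ : V} (ha₀ : a₀ ∈ A) (hb₀ : b₀ ∈ B) :
    ∃ v ∈ A, ∃ w ∈ B, ∀ a ∈ A, ∀ b ∈ B, (hG.path v w).support ⊆ (hG.path a b).support := by
  by_cases hmeet : ∃ c, c ∈ A ∧ c ∈ B
  · obtain ⟨c, hcA, hcB⟩ := hmeet
    have hc : ∀ z ∈ (hG.path c c).support, z = c := by simp [support_path_self]
    have hABc : ∀ z ∈ A, z ∈ B → z = c := fun z hzA hzB => hAB ⟨hzA, hzB⟩ ⟨hcA, hcB⟩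
    exact ⟨c, hcA, c, hcB, fun a ha b hb => hG.support_path_subset_of_gates hA hB hcA hcB
      (fun z hz _ => hc z hz) (fun z hz _ => hc z hz) hABc hABc ha hb⟩
  push Not at hmeet
  -- A path meeting `A` only in its start `v` and `B` only in its end `w`.
  obtain ⟨v, q, _, hvA, hq, hqA⟩ := (hG.path b₀ a₀).exists_eq_append_of_mem_set ha₀
  obtain ⟨w, s, _, hwB, hs, hsB⟩ := q.reverse.exists_eq_append_of_mem_set hb₀
  have hqs : s.support ⊆ q.support := by
    intro z hz
    have : z ∈ q.reverse.support := hs ▸ (Walk.mem_support_append_iff _ _).2 (Or.inl hz)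
    simpa using this
  have hspath : s.IsPath := by
    have hqpath : q.IsPath := (hq ▸ hG.isPath_path b₀ a₀).of_append_left
    exact (hs ▸ hqpath.reverse : (s.append _).IsPath).of_append_left
  rw [hG.eq_path hspath] at hqs hsB
  exact ⟨v, hvA, w, hwB, fun a ha b hb => hG.support_path_subset_of_gates hA hB hvA hwB
    (fun z hz hzA => hqA z (hqs hz) hzA) hsB (fun z hzA hzB => (hmeet z hzA hzB).elim)
    (fun z hzA hzB => (hmeet z hzA hzB).elim) ha hb⟩

lemma eq_of_adj_of_degree_le_one [G.LocallyFinite] {v x y : V} (hv : G.degree v ≤ 1)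
    (hx : G.Adj v x) (hy : G.Adj v y) : x = y :=
  subsingleton_neighborSet_of_degree_le_one hv hx hy

lemma exists_one_lt_degree_mem_support_path [G.LocallyFinite] {v w r : V} (hvw : v ≠ w)
    (hr : 1 < G.degree r) : ∃ z ∈ (hG.path v w).support, 1 < G.degree z := by
  by_contra! hleaf
  obtain ⟨z, hvz, q, hq⟩ := Walk.exists_eq_cons_of_ne hvw (hG.path v w)
  have hz : z ∈ (hG.path v w).support := by simp [hq]
  have hzw : z = w := by
    by_contra hzw
    exact (hG.isPath_path v w).notMem_support_of_degree_le_one (G.ne_of_adj hvz).symm hzw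
      (hleaf z hz) hz
  -- Now `v` and `z` are adjacent leaves, so every path from `v` to `r` passes through the leaf `z`.
  subst hzw
  have hdeg_v := hleaf v (hG.path v z).start_mem_support
  have hdeg_z := hleaf z hz
  have hrv : v ≠ r := by rintro rfl; omega
  obtain ⟨y, hvy, q', hq'⟩ := Walk.exists_eq_cons_of_ne hrv (hG.path v r)
  obtain rfl := eq_of_adj_of_degree_le_one hdeg_v hvz hvy
  exact (hG.isPath_path v r).notMem_support_of_degree_le_one (G.ne_of_adj hvz).symm
    (by rintro rfl; omega) hdeg_z (by simp [hq'])

end IsTree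

variable {ι : Type*}

def Separates (G : SimpleGraph V) (ℓ : ι → V) (v : V) (χ : ι → Bool) : Prop :=
  ∀ x y, χ x ≠ χ y → ∀ p : G.Walk (ℓ x) (ℓ y), v ∈ p.support

/-- A separated character is constant on each branch at `v`, so it factors through the map sending
a leaf to the neighbour of `v` on its branch. -/
lemma card_separates_le [Fintype ι] [DecidableEq ι] [G.LocallyFinite] (hG : G.Connected)
    {ℓ : ι → V} {v : V} (hv : v ∉ Set.range ℓ) :
    #{χ : ι → Bool | G.Separates ℓ v χ} ≤ 2 ^ G.degree v := by
  have hbranch : ∀ x, ∃ u : G.neighborSet v, ∃ q : G.Walk u (ℓ x), v ∉ q.support := by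
    intro x
    obtain ⟨p, hp⟩ := hG.exists_isPath v (ℓ x)
    obtain ⟨u, hvu, q, rfl⟩ := Walk.exists_eq_cons_of_ne (fun h => hv ⟨x, h.symm⟩) p
    exact ⟨⟨u, hvu⟩, q, ((Walk.cons_isPath_iff _ _).1 hp).2⟩
  choose g q hq using hbranch
  have hfactor : ∀ χ, G.Separates ℓ v χ → Function.FactorsThrough χ g := by
    intro χ hχ x y hxy
    by_contra hne
    have hv := hχ x y hne ((q x).reverse.append ((q y).copy (congrArg Subtype.val hxy).symm rfl))
    rw [Walk.mem_support_append_iff, Walk.support_reverse, List.mem_reverse,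
      Walk.support_copy] at hv
    exact hv.elim (hq x) (hq y)
  calc #{χ : ι → Bool | G.Separates ℓ v χ}
      ≤ #(univ.image fun f : G.neighborSet v → Bool => f ∘ g) := by
        refine card_le_card fun χ hχ => ?_
        refine mem_image.2 ⟨Function.extend g χ default, mem_univ _, funext fun x => ?_⟩
        exact (hfactor χ (mem_filter.1 hχ).2).extend_apply default x
    _ ≤ Fintype.card (G.neighborSet v → Bool) := card_image_le
    _ = 2 ^ G.degree v := by rw [Fintype.card_fun, Fintype.card_bool, card_neighborSet_eq_degree]

lemma IsTree.separates_of_forall_mem_support_path (hG : G.IsTree) {ℓ : ι → V} {χ : ι → Bool}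
    {z : V} (hz : ∀ x y, χ x = true → χ y = false → z ∈ (hG.path (ℓ x) (ℓ y)).support) :
    G.Separates ℓ z χ := by
  intro x y hxy p
  apply hG.support_path_subset p
  have hy : χ y = !χ x := Bool.eq_not_iff.2 hxy.symm
  cases hx : χ x
  · exact hG.mem_support_path_comm.1 (hz y x (by simpa [hx] using hy) hx)
  · exact hz x y hx (by simpa [hx] using hy)

lemma IsTree.exists_separates_of_compatWithTree [G.LocallyFinite] (hG : G.IsTree) {n : ℕ}
    {ℓ : Fin n → V} (hinj : Function.Injective ℓ)
    (hleaf : ∀ v, G.degree v ≤ 1 ↔ v ∈ Set.range ℓ) {r : V} (hr : r ∉ Set.range ℓ)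
    {χ : Fin n → Bool} (hχ : CompatWithTree G ℓ χ) :
    ∃ v ∉ Set.range ℓ, G.Separates ℓ v χ := by
  by_cases hconst : ∀ x y, χ x = χ y
  · exact ⟨r, hr, fun x y hxy => absurd (hconst x y) hxy⟩
  obtain ⟨⟨a₀, ha₀⟩, b₀, hb₀⟩ : (∃ a, χ a = true) ∧ ∃ b, χ b = false := by
    push Not at hconst
    obtain ⟨x, y, hxy⟩ := hconst
    have hy : χ y = !χ x := Bool.eq_not_iff.2 hxy.symm
    cases hx : χ x
    · exact ⟨⟨y, by simpa [hx] using hy⟩, x, hx⟩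
    · exact ⟨⟨x, hx⟩, y, by simpa [hx] using hy⟩
  obtain ⟨v, hvA, w, hwB, hsub⟩ := hG.exists_support_path_subset (hG.pathConvex_tspan _)
    (hG.pathConvex_tspan _) hχ (subset_tspan _ ⟨a₀, ha₀, rfl⟩) (subset_tspan _ ⟨b₀, hb₀, rfl⟩)
  obtain ⟨z, hz, hzdeg⟩ : ∃ z ∈ (hG.path v w).support, 1 < G.degree z := by
    by_cases hvw : v = w
    · subst hvw
      refine ⟨v, (hG.path v v).start_mem_support, not_le.1 fun hv => ?_⟩
      obtain ⟨x, hx, rfl⟩ := mem_of_mem_tspan_of_degree_le_one hvA hv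
      obtain ⟨y, hy, hyx⟩ := mem_of_mem_tspan_of_degree_le_one hwB hv
      have hy : χ y = false := hy
      rw [hinj hyx, hx] at hy
      exact Bool.noConfusion hy
    · exact hG.exists_one_lt_degree_mem_support_path hvw (not_le.1 fun h => hr ((hleaf r).1 h))
  exact ⟨z, fun h => hzdeg.not_ge ((hleaf z).2 h), hG.separates_of_forall_mem_support_path
    fun x y hx hy => hsub _ (subset_tspan _ ⟨x, hx, rfl⟩) _ (subset_tspan _ ⟨y, hy, rfl⟩) hz⟩

lemma IsTree.card_compatWithTree_le_sum [Fintype V] [DecidableEq V] [DecidableRel G.Adj]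
    (hG : G.IsTree) {n : ℕ} {ℓ : Fin n → V} (hinj : Function.Injective ℓ)
    (hleaf : ∀ v, G.degree v ≤ 1 ↔ v ∈ Set.range ℓ) {r : V} (hr : r ∉ Set.range ℓ) :
    #{χ | CompatWithTree G ℓ χ} ≤ ∑ v with v ∉ Set.range ℓ, 2 ^ G.degree v :=
  calc #{χ | CompatWithTree G ℓ χ}
      ≤ #(({v | v ∉ Set.range ℓ} : Finset V).biUnion fun v => {χ | G.Separates ℓ v χ}) := by
        refine card_le_card fun χ hχ => ?_
        obtain ⟨v, hv, hsep⟩ :=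
          hG.exists_separates_of_compatWithTree hinj hleaf hr (mem_filter.1 hχ).2
        exact mem_biUnion.2 ⟨v, mem_filter.2 ⟨mem_univ v, hv⟩, mem_filter.2 ⟨mem_univ χ, hsep⟩⟩
    _ ≤ ∑ v with v ∉ Set.range ℓ, #{χ | G.Separates ℓ v χ} := card_biUnion_le
    _ ≤ ∑ v with v ∉ Set.range ℓ, 2 ^ G.degree v :=
        sum_le_sum fun v hv => card_separates_le hG.connected (mem_filter.1 hv).2

lemma IsTree.card_edgeFinset_filter_add_one_le [Fintype V] [DecidableEq V] [DecidableRel G.Adj]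
    (hG : G.IsTree) {p : V → Prop} [DecidablePred p] (hp : ∃ v, p v)
    (hleaf : ∀ v, ¬ p v → G.degree v ≤ 1) :
    #{e ∈ G.edgeFinset | ∀ v ∈ e, p v} + 1 ≤ #{v | p v} := by
  have : Nonempty {v | p v} := let ⟨v, hv⟩ := hp; ⟨⟨v, hv⟩⟩
  have hH : (G.induce {v | p v}).IsTree :=
    ⟨(connected_iff _).2 ⟨hG.connected.preconnected.induce_of_degree_eq_one fun v hv =>
      subsingleton_neighborSet_of_degree_le_one (hleaf v hv), this⟩, hG.isAcyclic.induce _⟩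
  have hsurj : Set.SurjOn (Sym2.map Subtype.val)
      ((G.induce {v | p v}).edgeFinset : Set (Sym2 {v | p v}))
      (({e ∈ G.edgeFinset | ∀ v ∈ e, p v} : Finset (Sym2 V)) : Set (Sym2 V)) := by
    intro e he
    induction e with
    | _ a b =>
      obtain ⟨hab, hpe⟩ := mem_filter.1 (mem_coe.1 he)
      exact ⟨s(⟨a, hpe a (Sym2.mem_mk_left a b)⟩, ⟨b, hpe b (Sym2.mem_mk_right a b)⟩),
        by simpa using hab, rfl⟩
  calc #{e ∈ G.edgeFinset | ∀ v ∈ e, p v} + 1 ≤ #(G.induce {v | p v}).edgeFinset + 1 :=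
        Nat.add_le_add_right (card_le_card_of_surjOn _ hsurj) 1
    _ = #{v | p v} := by rw [hH.card_edgeFinset, Fintype.card_ofFinset]; rfl

lemma IsTree.sum_degree_add_two [Fintype V] [DecidableEq V] [DecidableRel G.Adj]
    (hG : G.IsTree) {p : V → Prop} [DecidablePred p] (hp : ∀ v, ¬ p v → G.degree v = 1) :
    ∑ v with p v, G.degree v + 2 = #{v | ¬ p v} + 2 * #{v | p v} := by
  have hleaves : ∑ v with ¬ p v, G.degree v = #{v | ¬ p v} := by
    rw [card_eq_sum_ones]
    exact sum_congr rfl fun v hv => hp v (mem_filter.1 hv).2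
  have hsplit := sum_filter_add_sum_filter_not univ (fun v => p v) (G.degree ·)
  have hcard := card_filter_add_card_filter_not (s := univ) (fun v => p v)
  have hedges := hG.card_edgeFinset
  have hsum := G.sum_degrees_eq_twice_card_edges
  rw [card_univ] at hcard
  omega

end SimpleGraph

lemma sum_two_pow_le_card_sub_one_add {α : Type*} {s : Finset α} (hs : s.Nonempty) (d : α → ℕ) :
    ∑ i ∈ s, 2 ^ d i ≤ #s - 1 + 2 ^ ∑ i ∈ s, d i := by
  induction hs using Finset.Nonempty.cons_induction with
  | singleton a => simp
  | cons a s ha hs ih =>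
    rw [sum_cons, sum_cons, card_cons, pow_add]
    have h₁ : 1 ≤ 2 ^ d a := Nat.one_le_two_pow
    have h₂ : 1 ≤ 2 ^ ∑ i ∈ s, d i := Nat.one_le_two_pow
    have hs' : 1 ≤ #s := card_pos.2 hs
    have key : 2 ^ d a + 2 ^ ∑ i ∈ s, d i ≤ 2 ^ d a * 2 ^ ∑ i ∈ s, d i + 1 := by nlinarith
    omega

lemma add_two_pow_sub_le {j k m : ℕ} (hkj : k ≤ j) (hjm : j ≤ m) :
    j + 2 ^ (m - j) ≤ k + 2 ^ (m - k) := by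
  obtain ⟨a, rfl⟩ := Nat.exists_eq_add_of_le hkj
  obtain ⟨b, rfl⟩ := Nat.exists_eq_add_of_le hjm
  have hsplit : k + a + b - k = a + b := by omega
  rw [Nat.add_sub_cancel_left, hsplit, pow_add]
  have ha : a + 1 ≤ 2 ^ a := Nat.lt_two_pow_self
  have hb : 1 ≤ 2 ^ b := Nat.one_le_two_pow
  nlinarith

lemma sum_two_pow_le_of_sum_eq {α : Type*} {s : Finset α} {x : α → ℕ} {k N : ℕ}
    (hx : ∀ i ∈ s, 3 ≤ x i) (hk : k < #s) (hsum : ∑ i ∈ s, x i + 2 = N + 2 * #s) :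
    k + 3 ≤ N ∧ ∑ i ∈ s, 2 ^ x i ≤ 8 * k + 8 * 2 ^ (N - 3 - k) := by
  have hshift : ∑ i ∈ s, x i = ∑ i ∈ s, (x i - 3) + 3 * #s := by
    rw [mul_comm, ← smul_eq_mul, ← sum_const, ← sum_add_distrib]
    exact sum_congr rfl fun i hi => by have := hx i hi; omega
  have hpow : ∑ i ∈ s, 2 ^ x i = 8 * ∑ i ∈ s, 2 ^ (x i - 3) := by
    rw [mul_sum]
    refine sum_congr rfl fun i hi => ?_
    rw [← pow_sub_mul_pow 2 (hx i hi)]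
    ring
  have hs : s.Nonempty := card_pos.1 (by omega)
  refine ⟨by omega, ?_⟩
  calc ∑ i ∈ s, 2 ^ x i ≤ 8 * (#s - 1 + 2 ^ (N - 3 - (#s - 1))) := by
        rw [hpow, show N - 3 - (#s - 1) = ∑ i ∈ s, (x i - 3) by omega]
        exact Nat.mul_le_mul_left 8 (sum_two_pow_le_card_sub_one_add hs _)
    _ ≤ 8 * (k + 2 ^ (N - 3 - k)) :=
        Nat.mul_le_mul_left 8 (add_two_pow_sub_le (by omega) (by omega))
    _ = 8 * k + 8 * 2 ^ (N - 3 - k) := mul_add 8 _ _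

lemma div_two_pow_le_of_le {c k n : ℕ} (hkn : k + 3 ≤ n) (hc : c ≤ 8 * k + 8 * 2 ^ (n - 3 - k)) :
    (c : ℝ) / 2 ^ n ≤ k * (1 / 2) ^ (n - 3) + (1 / 2) ^ k := by
  obtain ⟨m, rfl⟩ := Nat.exists_eq_add_of_le hkn
  have h₁ : k + 3 + m - 3 = k + m := by omega
  have h₂ : k + 3 + m - 3 - k = m := by omega
  rw [h₂] at hc
  rw [h₁, div_le_iff₀ (by positivity)]
  calc (c : ℝ) ≤ 8 * k + 8 * 2 ^ m := by exact_mod_cast hc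
    _ = (k * (1 / 2) ^ (k + m) + (1 / 2) ^ k) * 2 ^ (k + 3 + m) := by
      rw [one_div, inv_pow, inv_pow]
      field_simp
      ring

/-- For an unrooted phylogenetic tree G with n leaves and at least k interior edges,
the probability that a uniformly random binary character is compatible with G is at
most k(1/2)^(n-3) + (1/2)^k. -/
theorem stmt10 {V : Type*} [Fintype V] [DecidableEq V]
    (G : SimpleGraph V) [DecidableRel G.Adj] (hG : G.IsTree)
    {n : ℕ} (ℓ : Fin n → V) (hinj : Function.Injective ℓ)
    (hleaf : ∀ v : V, G.degree v = 1 ↔ v ∈ Set.range ℓ)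
    (hint : ∀ v : V, v ∉ Set.range ℓ → 3 ≤ G.degree v)
    (k : ℕ)
    (hk : k ≤ (G.edgeFinset.filter fun e => ∀ v ∈ e, G.degree v ≠ 1).card) :
    ((Finset.univ.filter fun χ : Fin n → Bool => CompatWithTree G ℓ χ).card : ℝ)
          / 2 ^ n
      ≤ (k : ℝ) * ((1 : ℝ) / 2) ^ (n - 3) + ((1 : ℝ) / 2) ^ k := by
  rcases Nat.eq_zero_or_pos k with rfl | hk₀
  · have hcard : (#{χ | CompatWithTree G ℓ χ} : ℝ) ≤ 2 ^ n := by
      exact_mod_cast (card_le_univ _).trans_eq (by simp)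
    simpa using div_le_one_of_le₀ hcard (by positivity)
  have hleaf' : ∀ v, G.degree v ≤ 1 ↔ v ∈ Set.range ℓ := fun v =>
    ⟨fun h => by_contra fun hv => by have := hint v hv; omega, fun h => ((hleaf v).2 h).le⟩
  have hinterior : ∀ v, G.degree v ≠ 1 ↔ v ∉ Set.range ℓ := fun v => (hleaf v).not
  obtain ⟨e, he⟩ := card_pos.1 (hk₀.trans_le hk)
  obtain ⟨r, hre⟩ : ∃ r, r ∈ e := ⟨_, Sym2.out_fst_mem e⟩
  have hr : G.degree r ≠ 1 := (mem_filter.1 he).2 r hre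
  have hedges := hG.card_edgeFinset_filter_add_one_le ⟨r, hr⟩
    fun v hv => (hleaf' v).2 ((hinterior v).not_left.1 hv)
  rw [filter_congr fun v _ => hinterior v] at hedges
  have hsum := hG.sum_degree_add_two (p := fun v => v ∉ Set.range ℓ) fun v hv =>
    (hleaf v).2 (not_not.1 hv)
  simp only [not_not, univ_filter_mem_range, card_image_of_injective _ hinj, card_univ,
    Fintype.card_fin] at hsum
  have hkS : k < #({v | v ∉ Set.range ℓ} : Finset V) := by omega
  obtain ⟨hkn, hbound⟩ := sum_two_pow_le_of_sum_eq (fun v hv => hint v (mem_filter.1 hv).2)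
    hkS hsum
  exact div_two_pow_le_of_le hkn
    ((hG.card_compatWithTree_le_sum hinj hleaf' ((hinterior r).1 hr)).trans hbound)
end
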